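/- Let n ≥ 2, let λ, ν ∈ ℂ with ν − λ a nonnegative integer, and let 1 ≤ p ≤ n−1. Then (x_p x_n)·𝒦_{λ−1,ν+1} = 4 γ(λ − (n−1)/2, ν−λ)·∂_p 𝒦_{λ+1,ν} as tempered distributions on ℝ^n. -/

import Mathlib

/-- Partial derivative ∂_p of a complex-valued function on ℝ^n. -/
noncomputable def pd {n : ℕ} (p : Fin n) (f : (Fin n → ℝ) → ℂ) : (Fin n → ℝ) → ℂ :=
  fun x => fderiv ℝ f x (Pi.single p 1)

/-- Δ' = ∂_1² + ⋯ + ∂_{n−1}², the Laplacian in the first n−1 variables on ℝ^n. -/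
noncomputable def lapP {n : ℕ} (f : (Fin n → ℝ) → ℂ) : (Fin n → ℝ) → ℂ :=
  fun x => ∑ j ∈ Finset.univ.filter (fun j : Fin n => (j : ℕ) < n - 1), pd j (pd j f) x

/-- ∂_n, the partial derivative in the last variable on ℝ^n. -/
noncomputable def pdLast {n : ℕ} (f : (Fin n → ℝ) → ℂ) : (Fin n → ℝ) → ℂ :=
  if h : 0 < n then pd ⟨n - 1, by omega⟩ f else 0

/-- The coefficient of z^{l−2k} in the renormalized Gegenbauer polynomial
C̃_l^α(z) = Σ_{k=0}^{⌊l/2⌋} (−1)^k (∏_{m=⌊(l+1)/2⌋}^{l−k−1}(α+m)) (2z)^{l−2k}/(k!(l−2k)!). -/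
noncomputable def gegenCoeff (α : ℂ) (l k : ℕ) : ℂ :=
  (-1 : ℂ) ^ k * (∏ m ∈ Finset.Ico ((l + 1) / 2) (l - k), (α + (m : ℂ))) *
    2 ^ (l - 2 * k) / ((Nat.factorial k : ℂ) * (Nat.factorial (l - 2 * k) : ℂ))

/-- The action on a test function `φ` of the tempered distribution
`𝒦_{λ,ν} = Σ_{k=0}^{⌊l/2⌋} a_k (−1)^k (Δ')^k ∂_n^{l−2k} δ` on ℝ^n, where `l = ν − λ`
and `a_k` are the coefficients of `C̃_l^{λ−(n−1)/2}`; each `∂` contributes a sign `−1`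
and δ evaluates at 0.  By convention `𝒦_{λ,ν} = 0` when `l < 0`. -/
noncomputable def Kact (n : ℕ) (lam : ℂ) (l : ℤ) (φ : (Fin n → ℝ) → ℂ) : ℂ :=
  if 0 ≤ l then
    ∑ k ∈ Finset.range (l.toNat / 2 + 1),
      gegenCoeff (lam - ((n : ℂ) - 1) / 2) l.toNat k *
        ((-1 : ℂ) ^ k * ((-1 : ℂ) ^ (l.toNat - 2 * k) *
          (pdLast (n := n))^[l.toNat - 2 * k] ((lapP (n := n))^[k] φ) 0))
  else 0

/-- γ(μ, a) := 1 if a is odd, μ + a/2 if a is even. -/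
noncomputable def gam (mu : ℂ) (a : ℕ) : ℂ := if a % 2 = 1 then 1 else mu + ((a / 2 : ℕ) : ℂ)

/-!
Multiplication by `x_i` and differentiation `∂_j` act on smooth functions with the Weyl-algebra
relations `[∂_j, x_i] = δ_ij`, `[∂_i, ∂_j] = 0`. Hence `[Δ', x_p] = 2∂_p` for `p ≤ n - 1`, while
`x_n` commutes with `Δ'`, and in the ring of operators
`∂_n^(m+1) Δ'^(k+1) x_p x_n = x_p X + x_n Y + 2(k+1)(m+1) ∂_n^m Δ'^k ∂_p`.
Evaluating at `0` kills the terms beginning with a coordinate function, so the `(k+1)`-st summand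
of `𝒦_{λ-1,ν+1}` applied to `x_p x_n φ` is a multiple of the `k`-th summand of `𝒦_{λ+1,ν}`
applied to `∂_p φ`, and all other summands vanish. The multiple is `-4 γ(λ - (n-1)/2, ν - λ)` by a
shift identity between Gegenbauer coefficients; the factor `γ` appears because the lower end
`⌊(l+1)/2⌋` of the product in `C̃_l` depends on the parity of `l`.
-/

open Finset
open scoped ContDiff

theorem pow_succ_mul_eq_mul_pow_succ_add {A : Type*} [Ring A] {T M C : A} (hTC : Commute T C)
    (h : T * M = M * T + C) (k : ℕ) :
    T ^ (k + 1) * M = M * T ^ (k + 1) + (k + 1) • (T ^ k * C) := by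
  induction k with
  | zero => simpa using h
  | succ k ih =>
    rw [pow_succ', mul_assoc, ih, mul_add, ← mul_assoc, h, add_mul, mul_assoc, ← pow_succ',
      mul_smul_comm, ← mul_assoc, ← pow_succ', add_assoc, ← (hTC.pow_left (k + 1)).eq,
      ← succ_nsmul']

namespace GegenbauerKernel

theorem prod_Ico_half_eq_gam_mul (α : ℂ) (L b : ℕ) (hb : (L + 1) / 2 ≤ b) :
    ∏ m ∈ Ico (L / 2) b, (α + 1 + m) = gam α (L + 1) * ∏ m ∈ Ico ((L + 1) / 2) b, (α + 1 + m) := by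
  rcases Nat.even_or_odd' L with ⟨r, rfl | rfl⟩
  · rw [show 2 * r / 2 = r by omega, show (2 * r + 1) / 2 = r by omega, gam, if_pos (by omega),
      one_mul]
  · rw [show (2 * r + 1) / 2 = r by omega, show (2 * r + 1 + 1) / 2 = r + 1 by omega,
      prod_eq_prod_Ico_succ_bot (by omega), gam, if_neg (by omega),
      show (2 * r + 1 + 1) / 2 = r + 1 by omega]
    push_cast
    ring

theorem gegenCoeff_sub_one_succ_mul (α : ℂ) (k j : ℕ) :
    gegenCoeff (α - 1) (2 * k + j + 3) (k + 1) * (2 * (k + 1) * (j + 1) : ℕ)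
      = -(4 * gam α (2 * k + j + 1)) * gegenCoeff (α + 1) (2 * k + j) k := by
  have hprod : ∏ m ∈ Ico ((2 * k + j + 3 + 1) / 2) (2 * k + j + 3 - (k + 1)), (α - 1 + m)
      = gam α (2 * k + j + 1) * ∏ m ∈ Ico ((2 * k + j + 1) / 2) (2 * k + j - k), (α + 1 + m) := by
    rw [← prod_Ico_half_eq_gam_mul _ _ _ (by omega),
      show (2 * k + j + 3 + 1) / 2 = (2 * k + j) / 2 + 2 by omega,
      show 2 * k + j + 3 - (k + 1) = 2 * k + j - k + 2 by omega, ← prod_Ico_add']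
    push_cast
    ring_nf
  rw [gegenCoeff, gegenCoeff, hprod, show 2 * k + j + 3 - 2 * (k + 1) = j + 1 by omega,
    show 2 * k + j - 2 * k = j by omega, Nat.factorial_succ, Nat.factorial_succ]
  push_cast
  field_simp
  ring

noncomputable section

variable {n : ℕ}

def smoothFunctions (n : ℕ) : Submodule ℂ ((Fin n → ℝ) → ℂ) where
  carrier := {f | ContDiff ℝ ∞ f}
  add_mem' {_ _} hf hg := by simp only [Set.mem_ofPred_eq] at *; exact hf.add hg
  zero_mem' := by simp only [Set.mem_ofPred_eq]; exact contDiff_const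
  smul_mem' c _ hf := by simp only [Set.mem_ofPred_eq] at *; exact hf.const_smul c

local notation "𝒞∞" => smoothFunctions n

instance : CoeFun 𝒞∞ (fun _ => (Fin n → ℝ) → ℂ) := ⟨Subtype.val⟩

theorem contDiff_coe (f : 𝒞∞) : ContDiff ℝ ∞ f := f.2

theorem differentiable_coe (f : 𝒞∞) : Differentiable ℝ f :=
  (contDiff_coe f).differentiable (by simp)

theorem contDiff_pd (j : Fin n) (f : 𝒞∞) : ContDiff ℝ ∞ (pd j f) :=
  (ContinuousLinearMap.apply ℝ ℂ (Pi.single j 1 : Fin n → ℝ)).contDiff.comp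
    ((contDiff_coe f).fderiv_right (m := ∞) le_rfl)

def partialDeriv (j : Fin n) : Module.End ℂ 𝒞∞ where
  toFun f := ⟨pd j f, contDiff_pd j f⟩
  map_add' f g := by
    ext x
    simp [pd, fderiv_add (differentiable_coe f x) (differentiable_coe g x)]
  map_smul' c f := by
    ext x
    simp [pd, fderiv_const_smul (differentiable_coe f x) c]

def mulCoord (i : Fin n) : Module.End ℂ 𝒞∞ where
  toFun f := ⟨fun x => (x i : ℂ) * f x,
    ((Complex.ofRealCLM.contDiff.comp (contDiff_apply ℝ ℝ i)).mul (contDiff_coe f) :)⟩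
  map_add' f g := by ext x; simp [mul_add]
  map_smul' c f := by ext x; simp [mul_left_comm]

def lapPrime : Module.End ℂ 𝒞∞ :=
  ∑ j ∈ univ.filter (fun j : Fin n => (j : ℕ) < n - 1), partialDeriv j ^ 2

@[simp] theorem coe_partialDeriv (j : Fin n) (f : 𝒞∞) : ⇑(partialDeriv j f) = pd j f := rfl

@[simp] theorem coe_mulCoord (i : Fin n) (f : 𝒞∞) :
    ⇑(mulCoord i f) = fun x => (x i : ℂ) * f x := rfl

theorem coe_lapPrime (f : 𝒞∞) : ⇑(lapPrime f) = lapP f := by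
  ext x
  simp [lapPrime, lapP, LinearMap.sum_apply, pow_two]

theorem coe_partialDeriv_pow (j : Fin n) (m : ℕ) (f : 𝒞∞) :
    ⇑((partialDeriv j ^ m) f) = (pd j)^[m] f := by
  induction m generalizing f with
  | zero => rfl
  | succ m ih => rw [pow_succ, Module.End.mul_apply, ih, Function.iterate_succ_apply]; rfl

theorem coe_lapPrime_pow (k : ℕ) (f : 𝒞∞) : ⇑((lapPrime ^ k) f) = lapP^[k] f := by
  induction k generalizing f with
  | zero => rfl
  | succ k ih =>
    rw [pow_succ, Module.End.mul_apply, ih, Function.iterate_succ_apply, coe_lapPrime]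

theorem partialDeriv_mul_mulCoord (i j : Fin n) :
    partialDeriv j * mulCoord i = mulCoord i * partialDeriv j + if i = j then 1 else 0 := by
  ext f x
  let e : (Fin n → ℝ) →L[ℝ] ℂ :=
    Complex.ofRealCLM.comp (ContinuousLinearMap.proj (R := ℝ) (φ := fun _ => ℝ) i)
  have hxi : HasFDerivAt (fun y : Fin n → ℝ => (y i : ℂ)) e x := e.hasFDerivAt
  have hprod := fderiv_fun_mul hxi.differentiableAt (differentiable_coe f x)
  rcases eq_or_ne i j with rfl | h
  · simp [pd, Module.End.mul_apply, hprod, hxi.fderiv, e]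
  · simp [pd, Module.End.mul_apply, hprod, hxi.fderiv, e, h]

theorem pd_pd_apply (f : 𝒞∞) (i j : Fin n) (x : Fin n → ℝ) :
    pd i (pd j f) x = fderiv ℝ (fderiv ℝ f) x (Pi.single i 1) (Pi.single j 1) := by
  have hf' : Differentiable ℝ (fderiv ℝ f) :=
    ((contDiff_coe f).fderiv_right (m := ∞) le_rfl).differentiable (by simp)
  change fderiv ℝ (fun y => fderiv ℝ f y (Pi.single j 1)) x _ = _
  rw [fderiv_clm_apply (hf' x) (differentiableAt_const _)]
  simp

theorem commute_partialDeriv (i j : Fin n) : Commute (partialDeriv i) (partialDeriv j) := by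
  ext f x
  simp only [Module.End.mul_apply, coe_partialDeriv, pd_pd_apply]
  exact (contDiff_coe f).contDiffAt.isSymmSndFDerivAt (by simpa using ENat.LEInfty.out) _ _

theorem commute_partialDeriv_mulCoord {i j : Fin n} (h : i ≠ j) :
    Commute (partialDeriv j) (mulCoord i) := by
  simpa [Commute, SemiconjBy, h] using partialDeriv_mul_mulCoord i j

theorem lapPrime_mul_mulCoord (i : Fin n) :
    lapPrime * mulCoord i
      = mulCoord i * lapPrime + if (i : ℕ) < n - 1 then 2 • partialDeriv i else 0 := by
  have hj (j : Fin n) : partialDeriv j ^ 2 * mulCoord i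
      = mulCoord i * partialDeriv j ^ 2 + 2 • (partialDeriv j * if i = j then 1 else 0) := by
    have hC : Commute (partialDeriv j) (if i = j then 1 else 0) := by
      split_ifs
      exacts [Commute.one_right _, Commute.zero_right _]
    simpa using pow_succ_mul_eq_mul_pow_succ_add (A := Module.End ℂ 𝒞∞) hC
      (partialDeriv_mul_mulCoord i j) 1
  simp only [lapPrime, sum_mul, hj, sum_add_distrib, ← mul_sum, ← smul_sum, mul_ite, mul_one,
    mul_zero, sum_ite_eq, mem_filter, mem_univ, true_and]
  split_ifs <;> simp

theorem commute_lapPrime_partialDeriv (i : Fin n) : Commute lapPrime (partialDeriv i) :=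
  Commute.sum_left _ _ _ fun j _ => (commute_partialDeriv j i).pow_left 2

theorem lapPrime_pow_succ_mul_mulCoord_mul_mulCoord {p q : Fin n} (hp : (p : ℕ) < n - 1)
    (hq : n - 1 ≤ (q : ℕ)) (k : ℕ) :
    lapPrime ^ (k + 1) * mulCoord p * mulCoord q
      = mulCoord p * (lapPrime ^ (k + 1) * mulCoord q)
        + (2 * (k + 1)) • (mulCoord q * (lapPrime ^ k * partialDeriv p)) := by
  have hpq : p ≠ q := Fin.ne_of_val_ne (by omega)
  have hAp := pow_succ_mul_eq_mul_pow_succ_add (A := Module.End ℂ 𝒞∞)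
    ((commute_lapPrime_partialDeriv p).smul_right 2)
    (by simpa [hp] using lapPrime_mul_mulCoord p) k
  have hAq : Commute lapPrime (mulCoord q) := by
    simpa [not_lt.2 hq, Commute, SemiconjBy] using lapPrime_mul_mulCoord q
  have hkey : lapPrime ^ k * partialDeriv p * mulCoord q
      = mulCoord q * (lapPrime ^ k * partialDeriv p) := by
    rw [mul_assoc, (commute_partialDeriv_mulCoord hpq.symm).eq, ← mul_assoc, (hAq.pow_left k).eq,
      mul_assoc]
  rw [hAp, add_mul, mul_assoc (mulCoord p), smul_mul_assoc, mul_smul_comm, smul_mul_assoc, hkey,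
    smul_smul, mul_comm (k + 1)]

theorem partialDeriv_pow_succ_lapPrime_pow_succ_mulCoord_mulCoord_apply_zero {p q : Fin n}
    (hp : (p : ℕ) < n - 1) (hq : n - 1 ≤ (q : ℕ)) (k m : ℕ) (f : 𝒞∞) :
    ((partialDeriv q ^ (m + 1) * lapPrime ^ (k + 1) * mulCoord p * mulCoord q :
        Module.End ℂ 𝒞∞) f) 0
      = (2 * (k + 1) * (m + 1) : ℕ) *
          ((partialDeriv q ^ m * lapPrime ^ k * partialDeriv p : Module.End ℂ 𝒞∞) f) 0 := by
  have hpq : p ≠ q := Fin.ne_of_val_ne (by omega)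
  have hqq : partialDeriv q * mulCoord q = mulCoord q * partialDeriv q + 1 := by
    simpa using partialDeriv_mul_mulCoord q q
  have hDq := pow_succ_mul_eq_mul_pow_succ_add (A := Module.End ℂ 𝒞∞)
    (Commute.one_right (partialDeriv q)) hqq m
  have hDp : Commute (partialDeriv q ^ (m + 1)) (mulCoord p) :=
    (commute_partialDeriv_mulCoord hpq).pow_left _
  rw [mul_assoc, mul_assoc, ← mul_assoc (lapPrime ^ (k + 1)),
    lapPrime_pow_succ_mul_mulCoord_mul_mulCoord hp hq, mul_add, ← mul_assoc, hDp.eq, mul_smul_comm,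
    ← mul_assoc (partialDeriv q ^ (m + 1)) (mulCoord q), hDq]
  simp [Module.End.mul_apply]
  ring

theorem partialDeriv_pow_lapPrime_pow_mulCoord_mulCoord_apply_zero_of_eq_zero {p q : Fin n}
    (hp : (p : ℕ) < n - 1) (hq : n - 1 ≤ (q : ℕ)) {k m : ℕ} (h : k = 0 ∨ m = 0) (f : 𝒞∞) :
    ((partialDeriv q ^ m * lapPrime ^ k * mulCoord p * mulCoord q : Module.End ℂ 𝒞∞) f) 0
      = 0 := by
  have hpq : p ≠ q := Fin.ne_of_val_ne (by omega)
  rcases h with rfl | rfl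
  · rw [pow_zero, mul_one, ((commute_partialDeriv_mulCoord hpq).pow_left m).eq]
    simp [Module.End.mul_apply]
  · cases k with
    | zero => simp [Module.End.mul_apply]
    | succ k =>
      rw [pow_zero, one_mul, lapPrime_pow_succ_mul_mulCoord_mul_mulCoord hp hq]
      simp [Module.End.mul_apply]

def kactSummand (n : ℕ) (lam : ℂ) (L k : ℕ) (f : (Fin n → ℝ) → ℂ) : ℂ :=
  gegenCoeff (lam - ((n : ℂ) - 1) / 2) L k *
    ((-1 : ℂ) ^ k * ((-1 : ℂ) ^ (L - 2 * k) *
      (pdLast (n := n))^[L - 2 * k] ((lapP (n := n))^[k] f) 0))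

theorem Kact_natCast (lam : ℂ) (L : ℕ) (f : (Fin n → ℝ) → ℂ) :
    Kact n lam L f = ∑ k ∈ range (L / 2 + 1), kactSummand n lam L k f := by
  simp [Kact, kactSummand]

theorem Kact_natCast_sub_one (lam : ℂ) (L : ℕ) (f : (Fin n → ℝ) → ℂ) :
    Kact n lam (L - 1) f = ∑ k ∈ range ((L + 1) / 2), kactSummand n lam (L - 1) k f := by
  cases L with
  | zero => simp [Kact]
  | succ L =>
    rw [show ((L + 1 : ℕ) : ℤ) - 1 = L by push_cast; ring, Kact_natCast,
      show (L + 1 + 1) / 2 = L / 2 + 1 by omega, Nat.add_sub_cancel]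

theorem pdLast_eq (hn : 0 < n) : pdLast (n := n) = pd ⟨n - 1, by omega⟩ := by
  funext f
  simp [pdLast, hn]

theorem kactSummand_eq (hn : 0 < n) (lam : ℂ) (L k : ℕ) (f : 𝒞∞) :
    kactSummand n lam L k f
      = gegenCoeff (lam - ((n : ℂ) - 1) / 2) L k * ((-1 : ℂ) ^ k * ((-1 : ℂ) ^ (L - 2 * k) *
        ((partialDeriv ⟨n - 1, by omega⟩ ^ (L - 2 * k) * lapPrime ^ k : Module.End ℂ 𝒞∞) f) 0)) := by
  rw [kactSummand, pdLast_eq hn, Module.End.mul_apply, coe_partialDeriv_pow, coe_lapPrime_pow]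

theorem kactSummand_mulCoord_mulCoord_eq_zero {p : Fin n} (hp : (p : ℕ) < n - 1) (lam : ℂ)
    {L k : ℕ} (h : k = 0 ∨ L ≤ 2 * k) (f : 𝒞∞) :
    kactSummand n lam L k (mulCoord p (mulCoord ⟨n - 1, by omega⟩ f)) = 0 := by
  rw [kactSummand_eq (by omega), ← Module.End.mul_apply, ← Module.End.mul_apply, ← mul_assoc,
    partialDeriv_pow_lapPrime_pow_mulCoord_mulCoord_apply_zero_of_eq_zero hp le_rfl (by omega)]
  simp

theorem kactSummand_succ_mulCoord_mulCoord {p : Fin n} (hp : (p : ℕ) < n - 1) (lam : ℂ)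
    (k j : ℕ) (f : 𝒞∞) :
    kactSummand n (lam - 1) (2 * k + j + 3) (k + 1) (mulCoord p (mulCoord ⟨n - 1, by omega⟩ f))
      = -(4 * gam (lam - ((n : ℂ) - 1) / 2) (2 * k + j + 1)) *
          kactSummand n (lam + 1) (2 * k + j) k (partialDeriv p f) := by
  rw [kactSummand_eq (by omega), kactSummand_eq (by omega),
    show 2 * k + j + 3 - 2 * (k + 1) = j + 1 by omega, show 2 * k + j - 2 * k = j by omega,
    ← Module.End.mul_apply, ← Module.End.mul_apply, ← mul_assoc,
    partialDeriv_pow_succ_lapPrime_pow_succ_mulCoord_mulCoord_apply_zero hp le_rfl,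
    Module.End.mul_apply, show lam - 1 - ((n : ℂ) - 1) / 2 = lam - ((n : ℂ) - 1) / 2 - 1 by ring,
    show lam + 1 - ((n : ℂ) - 1) / 2 = lam - ((n : ℂ) - 1) / 2 + 1 by ring]
  linear_combination (-1 : ℂ) ^ k * (-1) ^ j *
    ((partialDeriv ⟨n - 1, by omega⟩ ^ j * lapPrime ^ k : Module.End ℂ 𝒞∞) (partialDeriv p f) 0) *
      gegenCoeff_sub_one_succ_mul (lam - ((n : ℂ) - 1) / 2) k j

end

end GegenbauerKernel

open GegenbauerKernel

/-- `(x_p x_n)·𝒦_{λ−1,ν+1} = 4 γ(λ − (n−1)/2, ν−λ)·∂_p 𝒦_{λ+1,ν}` as tempered distributions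
on ℝ^n, tested against an arbitrary Schwartz function `φ`; `(x_p x_n·T)(φ) = T(x_p x_n φ)`
and `(∂_p T)(φ) = −T(∂_p φ)`. -/
theorem stmt12 (n : ℕ) (lam : ℂ) (l : ℤ) (hl : 0 ≤ l)
    (p : Fin n) (hp : (p : ℕ) < n - 1)
    (φ : SchwartzMap (Fin n → ℝ) ℂ) :
    Kact n (lam - 1) (l + 2) (fun x => ((x p * x ⟨n - 1, by omega⟩ : ℝ) : ℂ) * φ x)
      = 4 * gam (lam - ((n : ℂ) - 1) / 2) l.toNat *
          (-(Kact n (lam + 1) (l - 1) (pd p ⇑φ))) := by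
  obtain ⟨L, rfl⟩ := Int.eq_ofNat_of_zero_le hl
  let ψ : smoothFunctions n := ⟨φ, φ.smooth ⊤⟩
  have hψ : (fun x => ((x p * x ⟨n - 1, by omega⟩ : ℝ) : ℂ) * φ x)
      = ⇑(mulCoord p (mulCoord ⟨n - 1, by omega⟩ ψ)) := by
    funext x
    simp [ψ, mul_assoc]
  rw [hψ, show pd p ⇑φ = ⇑(partialDeriv p ψ) from rfl, show (L : ℤ) + 2 = ((L + 2 : ℕ) : ℤ) by
    push_cast; ring, Kact_natCast, Kact_natCast_sub_one, Int.toNat_natCast, mul_neg, mul_sum,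
    ← sum_neg_distrib, sum_range_succ', kactSummand_mulCoord_mulCoord_eq_zero hp _ (Or.inl rfl),
    add_zero]
  rw [← sum_subset (range_subset_range.2 (show (L + 1) / 2 ≤ (L + 2) / 2 by omega))
      fun j _ hj => kactSummand_mulCoord_mulCoord_eq_zero hp _ (L := L + 2) (k := j + 1)
        (by simp at hj; omega) ψ]
  refine sum_congr rfl fun j hj => ?_
  obtain ⟨i, rfl⟩ : ∃ i, L = 2 * j + i + 1 := ⟨L - 2 * j - 1, by simp at hj; omega⟩
  rw [kactSummand_succ_mulCoord_mulCoord hp, Nat.add_sub_cancel]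
  ring
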